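/- For the embedding H₃ ← H₂ (obtained by deleting the first ω-coordinate of each orbit point), the embedding index equals 3/2 for the orbit of (1,0,0): the sum of squared lengths of the 12 icosahedron vertices (H₃ inner product) equals 3/2 times the sum of squared H₂-lengths of the 12 points obtained by deleting the first coordinate. -/

import Mathlib

/-!
The twelve vertices form the Weyl orbit of `ω₁`, so all have the same `H₃` norm
`⟨ω₁, ω₁⟩ = 2 (C₃⁻¹)₁₁ = 2 + τ`, and the left side is `12 (2 + τ)`. On the `H₂` side the norm
of `(b, c)` is `4 (2 + τ) / 5 · (b² + τ b c + c²)`; the projections of `±ω₁` vanish and the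
other ten have `b² + τ b c + c² = 1`, so the right side is `3/2 · 8 (2 + τ)`.
-/

open Matrix

section IcosahedralOrbit

variable {K : Type*} [Field K] [CharZero K] {τ : K}

def cartanH3 (τ : K) : Matrix (Fin 3) (Fin 3) K := !![2, -1, 0; -1, 2, -τ; 0, -τ, 2]

def cartanH2 (τ : K) : Matrix (Fin 2) (Fin 2) K := !![2, -τ; -τ, 2]

def icosahedronOrbit (τ : K) : List (Fin 3 → K) :=
  [![1, 0, 0], -![1, 0, 0], ![-1, 1, 0], -![-1, 1, 0],
   ![0, -1, τ], -![0, -1, τ], ![0, τ, -τ], -![0, τ, -τ],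
   ![τ, -τ, 1], -![τ, -τ, 1], ![τ, 0, -1], -![τ, 0, -1]]

theorem cartanH3_inv (hτ : τ ^ 2 = τ + 1) :
    (cartanH3 τ)⁻¹ =
      !![1 + τ / 2, 1 + τ, 1 / 2 + τ;
         1 + τ, 2 + 2 * τ, 1 + 2 * τ;
         1 / 2 + τ, 1 + 2 * τ, 3 / 2 + 3 * τ / 2] := by
  refine inv_eq_right_inv ?_
  ext i j
  fin_cases i <;> fin_cases j <;>
    simp [cartanH3, Matrix.mul_apply, Fin.sum_univ_succ] <;> grind

theorem cartanH2_inv (hτ : τ ^ 2 = τ + 1) :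
    (cartanH2 τ)⁻¹ =
      !![4 / 5 + 2 * τ / 5, 1 / 5 + 3 * τ / 5; 1 / 5 + 3 * τ / 5, 4 / 5 + 2 * τ / 5] := by
  refine inv_eq_right_inv ?_
  ext i j
  fin_cases i <;> fin_cases j <;>
    simp [cartanH2, Matrix.mul_apply, Fin.sum_univ_succ] <;> grind

theorem cartanH3_quadForm_of_mem_icosahedronOrbit (hτ : τ ^ 2 = τ + 1) {μ : Fin 3 → K}
    (hμ : μ ∈ icosahedronOrbit τ) : μ ⬝ᵥ (((2 : K) • (cartanH3 τ)⁻¹) *ᵥ μ) = 2 + τ := by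
  simp only [icosahedronOrbit, List.mem_cons, List.not_mem_nil, or_false] at hμ
  rcases hμ with rfl | rfl | rfl | rfl | rfl | rfl | rfl | rfl | rfl | rfl | rfl | rfl <;>
    simp [cartanH3_inv hτ, dotProduct, Matrix.mulVec, Fin.sum_univ_succ] <;> grind

theorem cartanH2_quadForm (hτ : τ ^ 2 = τ + 1) (w : Fin 2 → K) :
    w ⬝ᵥ (((2 : K) • (cartanH2 τ)⁻¹) *ᵥ w) =
      4 * (2 + τ) / 5 * (w 0 ^ 2 + τ * w 0 * w 1 + w 1 ^ 2) := by
  simp only [dotProduct, mulVec, cartanH2_inv hτ, Matrix.smul_apply, of_apply, cons_val',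
    cons_val_fin_one, smul_eq_mul, Fin.sum_univ_succ, Fin.isValue, cons_val_zero, Finset.univ_unique,
    Fin.default_eq_zero, cons_val_succ, Finset.sum_singleton, Fin.succ_zero_eq_one]
  linear_combination -(4 / 5 * w 0 * w 1) * hτ

theorem sum_cartanH3_quadForm_icosahedronOrbit (hτ : τ ^ 2 = τ + 1) :
    ((icosahedronOrbit τ).map fun μ => μ ⬝ᵥ (((2 : K) • (cartanH3 τ)⁻¹) *ᵥ μ)).sum =
      12 * (2 + τ) := by
  rw [List.map_congr_left fun μ hμ => cartanH3_quadForm_of_mem_icosahedronOrbit hτ hμ,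
    List.map_const', List.sum_replicate, nsmul_eq_mul]
  norm_num [icosahedronOrbit]

theorem sum_cartanH2_quadForm_icosahedronOrbit (hτ : τ ^ 2 = τ + 1) :
    ((icosahedronOrbit τ).map fun μ =>
      ![μ 1, μ 2] ⬝ᵥ (((2 : K) • (cartanH2 τ)⁻¹) *ᵥ ![μ 1, μ 2])).sum = 8 * (2 + τ) := by
  simp only [icosahedronOrbit, List.map_cons, List.map_nil, List.sum_cons, List.sum_nil,
    cartanH2_quadForm hτ]
  simp only [Fin.isValue, cons_val_zero, cons_val_one, cons_val, cons_val_fin_one, Pi.neg_apply]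
  linear_combination 8 * (2 + τ) / 5 * (1 - τ) * hτ

end IcosahedralOrbit

theorem H3_H2_embedding_index :
    let τ : ℝ := (1 + Real.sqrt 5) / 2
    let C3 : Matrix (Fin 3) (Fin 3) ℝ := !![2, -1, 0; -1, 2, -τ; 0, -τ, 2]
    let C2 : Matrix (Fin 2) (Fin 2) ℝ := !![2, -τ; -τ, 2]
    let ip3 : (Fin 3 → ℝ) → (Fin 3 → ℝ) → ℝ := fun u v => u ⬝ᵥ (((2 : ℝ) • C3⁻¹) *ᵥ v)
    let ip2 : (Fin 2 → ℝ) → (Fin 2 → ℝ) → ℝ := fun u v => u ⬝ᵥ (((2 : ℝ) • C2⁻¹) *ᵥ v)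
    let L : List (Fin 3 → ℝ) :=
      [![1, 0, 0], -![1, 0, 0], ![-1, 1, 0], -![-1, 1, 0],
       ![0, -1, τ], -![0, -1, τ], ![0, τ, -τ], -![0, τ, -τ],
       ![τ, -τ, 1], -![τ, -τ, 1], ![τ, 0, -1], -![τ, 0, -1]]
    (L.map (fun μ => ip3 μ μ)).sum =
      (3 / 2) * (L.map (fun μ => ip2 ![μ 1, μ 2] ![μ 1, μ 2])).sum := by
  intro τ C3 C2 ip3 ip2 L
  have hτ : τ ^ 2 = τ + 1 := Real.goldenRatio_sq
  have h3 : (L.map fun μ => ip3 μ μ).sum = 12 * (2 + τ) :=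
    sum_cartanH3_quadForm_icosahedronOrbit hτ
  have h2 : (L.map fun μ => ip2 ![μ 1, μ 2] ![μ 1, μ 2]).sum = 8 * (2 + τ) :=
    sum_cartanH2_quadForm_icosahedronOrbit hτ
  rw [h3, h2]
  ring
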